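/- Let w be an extended affine permutation whose Shi poset has width m. Let b, b' ∈ B_w with b' = b + t·(n,n) for some t ≥ 0, and suppose (b = b₀, b₁, …, b_k = b') is a reverse path, i.e. each b_{i+1} is strictly south and strictly east of b_i. Then k ≤ t·m. -/

import Mathlib

/-- The Shi relation `i ≤_S j` for an extended affine permutation `w`. -/
def ShiLe (n : ℕ) (w : ℤ → ℤ) (i j : ℤ) : Prop :=
  i = j ∨ (j < i ∧ w i < w j) ∨ w i + n < w j

/-- An antichain of the Shi poset of `w` on `{1,…,n}`. -/
def IsShiAntichain (n : ℕ) (w : ℤ → ℤ) (A : Finset ℤ) : Prop :=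
  A ⊆ Finset.Icc (1 : ℤ) n ∧
  ∀ i ∈ A, ∀ j ∈ A, i ≠ j → ¬ ShiLe n w i j ∧ ¬ ShiLe n w j i

/-- `m` is the width (maximal antichain size) of the Shi poset of `w`. -/
def IsShiWidth (n : ℕ) (w : ℤ → ℤ) (m : ℕ) : Prop :=
  (∃ A : Finset ℤ, IsShiAntichain n w A ∧ A.card = m) ∧
  ∀ A : Finset ℤ, IsShiAntichain n w A → A.card ≤ m

/-- A proper numbering of the balls `(i, w i)` of `w`, indexed by rows: monotone
(strictly northwest implies strictly smaller) and continuous (some ball weakly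
northwest is numbered one less). -/
def IsProper (w d : ℤ → ℤ) : Prop :=
  (∀ i j : ℤ, i < j → w i < w j → d i < d j) ∧
  (∀ j : ℤ, ∃ i : ℤ, i ≤ j ∧ w i ≤ w j ∧ d i = d j - 1)

/-- An `(n,n)`-invariant southeast chain of balls of `w` (identified by rows). -/
def IsChannelChain (n : ℕ) (w : ℤ → ℤ) (C : Set ℤ) : Prop :=
  (∀ i : ℤ, i ∈ C ↔ i + n ∈ C) ∧ ∀ i ∈ C, ∀ j ∈ C, i < j → w i < w j

/-- The density of such a chain: number of `(n,n)`-translate classes. -/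
noncomputable def chDensity (n : ℕ) (C : Set ℤ) : ℕ := (C ∩ Set.Icc (1 : ℤ) n).ncard

/-- A channel: an `(n,n)`-invariant southeast chain of maximal density. -/
def IsChannel (n : ℕ) (w : ℤ → ℤ) (C : Set ℤ) : Prop :=
  IsChannelChain n w C ∧
  ∀ D : Set ℤ, IsChannelChain n w D → chDensity n D ≤ chDensity n C

/-- `C₁` is southwest of `C₂`: every element of `C₁` has an element of `C₂`
weakly northeast of it. -/
def ChannelSW (n : ℕ) (w : ℤ → ℤ) (C₁ C₂ : Set ℤ) : Prop :=
  ∀ i ∈ C₁, ∃ j ∈ C₂, j ≤ i ∧ w i ≤ w j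


/-!
Strong induction on `k`. If two balls `p l`, `p l'` with `l < l' < k` lie in the same
`(n,n)`-translate class, the path splits into a reverse path from `p l` to `p l'`, of winding
`q`, and the path with that loop cut out, of winding `t - q`; both are shorter.

Otherwise the `k` balls lie in distinct classes. The `n`-translates of the path then form
`t` southeast chains (indexed by `ZMod t`) of period `t n`. Grading each ball by the number of
these chains passing strictly northeast of it gives a grading with values in `[0, t)`,
invariant under `(n,n)` and strictly increasing towards the southwest; each grade class of
representatives in `[1, n]` is a Shi antichain, so `k ≤ t m`.
-/

section Periodic

variable {n : ℕ} {w : ℤ → ℤ}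

theorem map_add_mul_of_map_add (hper : ∀ i, w (i + n) = w i + n) (x j : ℤ) :
    w (x + j * n) = w x + j * n := by
  have hperiodic : Function.Periodic (fun x => w x - x) (n : ℤ) := fun x => by
    simp only [hper]; ring
  have := hperiodic.int_mul j x
  simp only [Int.cast_id] at this
  linarith

theorem map_sub_mul_of_map_add (hper : ∀ i, w (i + n) = w i + n) (x j : ℤ) :
    w (x - j * n) = w x - j * n := by
  simpa [neg_mul, ← sub_eq_add_neg] using map_add_mul_of_map_add hper x (-j)

theorem exists_add_mul_mem_Icc (hn : 0 < n) (x : ℤ) :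
    ∃ j : ℤ, x + j * n ∈ Finset.Icc (1 : ℤ) n := by
  have hn' : (0 : ℤ) < n := by exact_mod_cast hn
  refine ⟨-((x - 1) / n), Finset.mem_Icc.mpr ?_⟩
  have := Int.mul_ediv_add_emod (x - 1) n
  have := Int.emod_nonneg (x - 1) hn'.ne'
  have := Int.emod_lt_of_pos (x - 1) hn'
  constructor <;> linarith

theorem isShiAntichain_of_forall_lt (A : Finset ℤ) (hA : A ⊆ Finset.Icc (1 : ℤ) n)
    (h : ∀ x ∈ A, ∀ y ∈ A, x < y → w x < w y ∧ w y < w x + n) :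
    IsShiAntichain n w A := by
  refine ⟨hA, fun x hx y hy hxy => ?_⟩
  unfold ShiLe
  rcases hxy.lt_or_gt with hlt | hlt
  · have := h x hx y hy hlt; omega
  · have := h y hy x hx hlt; omega

end Periodic

def IsReversePath (w : ℤ → ℤ) (k : ℕ) (p : ℕ → ℤ) : Prop :=
  ∀ l < k, p l < p (l + 1) ∧ w (p l) < w (p (l + 1))

namespace IsReversePath

variable {n : ℕ} {w : ℤ → ℤ} {k : ℕ} {p : ℕ → ℤ} {t : ℕ}

theorem lt_of_lt (hp : IsReversePath w k p) {a b : ℕ} (hab : a < b) (hb : b ≤ k) :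
    p a < p b ∧ w (p a) < w (p b) := by
  induction b, hab using Nat.le_induction with
  | base => exact hp a hb
  | succ b hab ih =>
    have := ih (by omega)
    have := hp b hb
    omega

theorem le_of_le (hp : IsReversePath w k p) {a b : ℕ} (hab : a ≤ b) (hb : b ≤ k) :
    p a ≤ p b ∧ w (p a) ≤ w (p b) := by
  rcases hab.eq_or_lt with rfl | hab
  · exact ⟨le_rfl, le_rfl⟩
  · exact (hp.lt_of_lt hab hb).imp le_of_lt le_of_lt

theorem segment (hp : IsReversePath w k p) {l d : ℕ} (h : l + d ≤ k) :
    IsReversePath w d (fun r => p (l + r)) :=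
  fun r hr => hp (l + r) (by omega)

theorem excise (hper : ∀ i, w (i + n) = w i + n) (hp : IsReversePath w k p)
    {l d : ℕ} {q : ℤ} (h : l + d ≤ k) (hq : p (l + d) = p l + q * n) :
    IsReversePath w (k - d) (fun r => if r ≤ l then p r else p (r + d) - q * n) := by
  intro r hr
  rcases lt_trichotomy r l with hrl | rfl | hrl
  · simp only [if_pos hrl.le, if_pos (show r + 1 ≤ l by omega)]
    exact hp r (by omega)
  · have := hp (r + d) (by omega)
    simp only [le_refl, if_true, show ¬ r + 1 ≤ r by omega, if_false,
      show r + 1 + d = r + d + 1 by omega, map_sub_mul_of_map_add hper]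
    have hwq := map_add_mul_of_map_add hper (p r) q
    rw [← hq] at hwq
    constructor <;> linarith
  · have := hp (r + d) (by omega)
    simp only [show ¬ r ≤ l by omega, show ¬ r + 1 ≤ l by omega, if_false,
      show r + 1 + d = r + d + 1 by omega, map_sub_mul_of_map_add hper]
    constructor <;> linarith


theorem map_translate_lt (hper : ∀ i, w (i + n) = w i + n) (hp : IsReversePath w k p)
    (hloop : p k = p 0 + t * n) {l l' : ℕ} (hl : l < k) (hl' : l' < k) {d : ℤ}
    (h : p l + d * (t * n) < p l') : w (p l) + d * (t * n) < w (p l') := by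
  have htn : (0 : ℤ) ≤ t * n := by positivity
  have hwloop : w (p k) = w (p 0) + t * n := by
    rw [hloop]; exact map_add_mul_of_map_add hper _ _
  rcases lt_trichotomy d 0 with hd | rfl | hd
  · have := (hp.lt_of_lt hl le_rfl).2
    have := (hp.le_of_le (Nat.zero_le l') hl'.le).2
    have : d * (t * n) ≤ -(t * n) := by nlinarith
    linarith
  · simp only [zero_mul, add_zero] at h ⊢
    have hll' : l < l' := by
      by_contra! hle
      exact (hp.le_of_le hle hl.le).1.not_gt h
    exact (hp.lt_of_lt hll' hl'.le).2
  · have := (hp.le_of_le (Nat.zero_le l) hl.le).1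
    have := (hp.lt_of_lt hl' le_rfl).1
    have : (t : ℤ) * n ≤ d * (t * n) := by nlinarith
    linarith

end IsReversePath

section Shadow

variable (n : ℕ) (w : ℤ → ℤ) (k : ℕ) (p : ℕ → ℤ) (t : ℕ) [NeZero t]

open Classical in
/-- The chains `c : ZMod t`, made of the translates `p l + j * n` with `j ≡ c`, that have a ball
strictly northeast of row `x`; the column of the ball in row `p l + j * n` is `w (p l) + j * n`. -/
noncomputable def shadow (x : ℤ) : Finset (ZMod t) :=
  Finset.univ.filter fun c =>
    ∃ l < k, ∃ j : ℤ, (j : ZMod t) = c ∧ p l + j * n < x ∧ w x < w (p l) + j * n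

variable {n w k p t}

theorem mem_shadow_add_mul_iff (hper : ∀ i, w (i + n) = w i + n) {x : ℤ} {j : ℤ}
    {c : ZMod t} : c ∈ shadow n w k p t (x + j * n) ↔ c - j ∈ shadow n w k p t x := by
  simp only [shadow, Finset.mem_filter, Finset.mem_univ, true_and,
    map_add_mul_of_map_add hper]
  constructor
  · rintro ⟨l, hl, i, rfl, h₁, h₂⟩
    exact ⟨l, hl, i - j, by push_cast; ring, by linarith, by linarith⟩
  · rintro ⟨l, hl, i, hi, h₁, h₂⟩
    exact ⟨l, hl, i + j, by push_cast; rw [hi]; ring, by linarith, by linarith⟩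

theorem card_shadow_add_mul (hper : ∀ i, w (i + n) = w i + n) (x j : ℤ) :
    (shadow n w k p t (x + j * n)).card = (shadow n w k p t x).card := by
  have : shadow n w k p t (x + j * n) =
      (shadow n w k p t x).map (Equiv.addRight (j : ZMod t)).toEmbedding := by
    ext c
    rw [Finset.mem_map_equiv, mem_shadow_add_mul_iff hper, Equiv.addRight_symm_apply,
      sub_eq_add_neg]
  rw [this, Finset.card_map]

theorem intCast_notMem_shadow (hper : ∀ i, w (i + n) = w i + n) (hp : IsReversePath w k p)
    (hloop : p k = p 0 + t * n) {l₀ : ℕ} (hl₀ : l₀ < k) (j₀ : ℤ) :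
    (j₀ : ZMod t) ∉ shadow n w k p t (p l₀ + j₀ * n) := by
  simp only [shadow, Finset.mem_filter, Finset.mem_univ, true_and,
    map_add_mul_of_map_add hper, not_exists, not_and]
  intro l hl j hj hrow hcol
  obtain ⟨d, hd⟩ := (ZMod.intCast_eq_intCast_iff_dvd_sub j₀ j t).mp hj.symm
  have hj : j = j₀ + d * t := by linarith
  subst hj
  have := hp.map_translate_lt hper hloop hl hl₀ (d := d) (by linarith)
  linarith

theorem shadow_ssubset_shadow (hper : ∀ i, w (i + n) = w i + n) (hp : IsReversePath w k p)
    (hloop : p k = p 0 + t * n) {l₀ : ℕ} (hl₀ : l₀ < k) {j₀ y : ℤ}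
    (hrow : p l₀ + j₀ * n < y) (hcol : w y < w (p l₀ + j₀ * n)) :
    shadow n w k p t (p l₀ + j₀ * n) ⊂ shadow n w k p t y := by
  refine (Finset.ssubset_iff_of_subset fun c hc => ?_).mpr
    ⟨j₀, ?_, intCast_notMem_shadow hper hp hloop hl₀ j₀⟩
  · simp only [shadow, Finset.mem_filter, Finset.mem_univ, true_and] at hc ⊢
    obtain ⟨l, hl, j, hj, h₁, h₂⟩ := hc
    exact ⟨l, hl, j, hj, h₁.trans hrow, hcol.trans h₂⟩
  · simp only [shadow, Finset.mem_filter, Finset.mem_univ, true_and]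
    rw [map_add_mul_of_map_add hper] at hcol
    exact ⟨l₀, hl₀, j₀, rfl, hrow, hcol⟩

theorem card_shadow_lt (hper : ∀ i, w (i + n) = w i + n) (hp : IsReversePath w k p)
    (hloop : p k = p 0 + t * n) {l₀ : ℕ} (hl₀ : l₀ < k) (j₀ : ℤ) :
    (shadow n w k p t (p l₀ + j₀ * n)).card < t := by
  simpa using Finset.card_lt_card
    ((Finset.ssubset_iff_of_subset (Finset.subset_univ _)).mpr
      ⟨(j₀ : ZMod t), Finset.mem_univ _, intCast_notMem_shadow hper hp hloop hl₀ j₀⟩)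

end Shadow

section Width

variable {n : ℕ} {w : ℤ → ℤ} {k : ℕ} {p : ℕ → ℤ} {t m : ℕ}

theorem lt_and_lt_add_of_card_shadow_eq [NeZero t] (hinj : Function.Injective w)
    (hper : ∀ i, w (i + n) = w i + n) (hp : IsReversePath w k p)
    (hloop : p k = p 0 + t * n) {l l' : ℕ} (hl : l < k) (hl' : l' < k) {j j' : ℤ}
    (hxy : p l + j * n < p l' + j' * n) (hyx : p l' + j' * n < p l + j * n + n)
    (hcard : (shadow n w k p t (p l + j * n)).card = (shadow n w k p t (p l' + j' * n)).card) :
    w (p l + j * n) < w (p l' + j' * n) ∧ w (p l' + j' * n) < w (p l + j * n) + n := by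
  set x := p l + j * n
  set y := p l' + j' * n
  have hne : w y ≠ w x := hinj.ne hxy.ne'
  have hne' : w y ≠ w (x + n) := hinj.ne hyx.ne
  have hshift : (shadow n w k p t (x + n)).card = (shadow n w k p t x).card := by
    simpa using card_shadow_add_mul hper x 1
  have h₁ : ¬ w y < w x := fun h =>
    (Finset.card_lt_card (shadow_ssubset_shadow hper hp hloop hl hxy h)).ne hcard
  have h₂ : ¬ w (x + n) < w y := fun h =>
    (Finset.card_lt_card (shadow_ssubset_shadow hper hp hloop hl' hyx h)).ne
      (hcard.symm.trans hshift.symm)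
  rw [hper] at h₂ hne'
  omega

theorem IsReversePath.length_le_mul_of_residues_injective (hinj : Function.Injective w)
    (hper : ∀ i, w (i + n) = w i + n) (hm : ∀ A, IsShiAntichain n w A → A.card ≤ m)
    (hp : IsReversePath w k p) (hloop : p k = p 0 + t * n)
    (hres : ∀ l < k, ∀ l' < k, p l ≡ p l' [ZMOD n] → l = l') : k ≤ t * m := by
  rcases k.eq_zero_or_pos with rfl | hk
  · exact Nat.zero_le _
  have htn : (0 : ℤ) < t * n := by linarith [(hp.lt_of_lt hk le_rfl).1]
  have ⟨ht, hn⟩ : 0 < t ∧ 0 < n := by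
    rcases pos_and_pos_or_neg_and_neg_of_mul_pos htn with h | h <;> omega
  have : NeZero t := ⟨ht.ne'⟩
  choose j hj using fun l => exists_add_mul_mem_Icc hn (p l)
  set r : ℕ → ℤ := fun l => p l + j l * n
  set ψ : ℕ → ℕ := fun l => (shadow n w k p t (p l)).card
  have hψ : ∀ l ∈ Finset.range k, ψ l ∈ Finset.range t := fun l hl => by
    simpa [ψ] using card_shadow_lt hper hp hloop (Finset.mem_range.mp hl) 0
  have hr : Set.InjOn r (Finset.range k) := fun l hl l' hl' hrl => by
    refine hres l (by simpa using hl) l' (by simpa using hl') (Int.modEq_iff_dvd.mpr ?_)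
    exact ⟨j l - j l', by simp only [r] at hrl; linear_combination -hrl⟩
  have hanti : ∀ c, IsShiAntichain n w (((Finset.range k).filter (ψ · = c)).image r) := by
    intro c
    refine isShiAntichain_of_forall_lt _ (Finset.image_subset_iff.mpr fun l _ => hj l) ?_
    simp only [Finset.mem_image, Finset.mem_filter, Finset.mem_range]
    rintro _ ⟨l, ⟨hl, rfl⟩, rfl⟩ _ ⟨l', ⟨hl', hl'c⟩, rfl⟩ hxy
    have := Finset.mem_Icc.mp (hj l)
    have := Finset.mem_Icc.mp (hj l')
    refine lt_and_lt_add_of_card_shadow_eq hinj hper hp hloop hl hl' hxy (by linarith) ?_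
    rw [card_shadow_add_mul hper, card_shadow_add_mul hper]
    exact hl'c.symm
  calc k = ∑ c ∈ Finset.range t, ((Finset.range k).filter (ψ · = c)).card := by
        simpa using Finset.card_eq_sum_card_fiberwise hψ
    _ = ∑ c ∈ Finset.range t, (((Finset.range k).filter (ψ · = c)).image r).card := by
        refine Finset.sum_congr rfl fun c _ => (Finset.card_image_of_injOn ?_).symm
        exact hr.mono (Finset.coe_subset.mpr (Finset.filter_subset _ _))
    _ ≤ ∑ _c ∈ Finset.range t, m := Finset.sum_le_sum fun c _ => hm _ (hanti c)
    _ = t * m := by simp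

theorem IsReversePath.length_le_mul (hinj : Function.Injective w)
    (hper : ∀ i, w (i + n) = w i + n) (hm : ∀ A, IsShiAntichain n w A → A.card ≤ m)
    (hp : IsReversePath w k p) (hloop : p k = p 0 + t * n) : k ≤ t * m := by
  induction k using Nat.strong_induction_on generalizing t p with | _ k ih =>
  by_cases hrep : ∃ l d, 0 < d ∧ l + d < k ∧ p l ≡ p (l + d) [ZMOD n]
  · obtain ⟨l, d, hd, hlk, hmod⟩ := hrep
    obtain ⟨q, hq⟩ := Int.modEq_iff_dvd.mp hmod
    replace hq : p (l + d) = p l + q * n := by linarith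
    have hlt := (hp.lt_of_lt (Nat.lt_add_of_pos_right hd) hlk.le).1
    lift q to ℕ using by nlinarith
    have hqt : q ≤ t := by
      have := (hp.le_of_le (Nat.zero_le l) (by omega)).1
      have := (hp.lt_of_lt hlk le_rfl).1
      have : (q : ℤ) * n < t * n := by linarith
      exact_mod_cast (lt_of_mul_lt_mul_right this (Int.natCast_nonneg n)).le
    have h₁ : d ≤ q * m := ih d (by omega) (hp.segment hlk.le) (by simpa using hq)
    have h₂ : k - d ≤ (t - q) * m := by
      refine ih (k - d) (by omega) (hp.excise hper hlk.le hq) ?_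
      simp only [show ¬ k - d ≤ l by omega, Nat.zero_le, if_true, if_false,
        Nat.sub_add_cancel (show d ≤ k by omega), hloop, Nat.cast_sub hqt]
      ring
    calc k = d + (k - d) := by omega
      _ ≤ q * m + (t - q) * m := add_le_add h₁ h₂
      _ = t * m := by rw [← Nat.add_mul, Nat.add_sub_cancel' hqt]
  · push Not at hrep
    refine hp.length_le_mul_of_residues_injective hinj hper hm hloop fun l hl l' hl' hmod => ?_
    rcases lt_trichotomy l l' with h | h | h
    · exact absurd hmod <| by
        simpa [Nat.add_sub_cancel' h.le] using hrep l (l' - l) (by omega) (by omega)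
    · exact h
    · exact absurd hmod.symm <| by
        simpa [Nat.add_sub_cancel' h.le] using hrep l' (l - l') (by omega) (by omega)

end Width

theorem stmt6_general (n : ℕ) (w : ℤ → ℤ)
    (hbij : Function.Bijective w) (hper : ∀ i : ℤ, w (i + n) = w i + n)
    (m : ℕ) (hm : IsShiWidth n w m)
    (t k : ℕ) (i : ℤ) (p : ℕ → ℤ)
    (h0 : p 0 = i) (hend : p k = i + t * n)
    (hstep : ∀ l, l < k → p l < p (l + 1) ∧ w (p l) < w (p (l + 1))) :
    k ≤ t * m := by
  subst h0
  exact IsReversePath.length_le_mul hbij.injective hper hm.2 hstep hend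

theorem stmt6 (n : ℕ) (hn : 0 < n) (w : ℤ → ℤ)
    (hbij : Function.Bijective w) (hper : ∀ i : ℤ, w (i + n) = w i + n)
    (m : ℕ) (hm : IsShiWidth n w m)
    (t k : ℕ) (i : ℤ) (p : ℕ → ℤ)
    (h0 : p 0 = i) (hend : p k = i + t * n)
    (hstep : ∀ l, l < k → p l < p (l + 1) ∧ w (p l) < w (p (l + 1))) :
    k ≤ t * m :=
  stmt6_general n w hbij hper m hm t k i p h0 hend hstep
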